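/- Let p be a prime, H a subgroup of 𝔽_p^×, and k ≥ 1 an integer. Define f(a) = (1/|H|)·∑_{s∈H} e(as/p) and ρ_k(x) = |H|^{−2k}·#{(s₁,…,s_{2k}) ∈ H^{2k} : s₁ − s₂ + ⋯ + s_{2k−1} − s_{2k} = x} for x ∈ 𝔽_p. Then for every a ∈ 𝔽_p one has ∑_{x∈𝔽_p} ρ_k(x)·|f(ax)|^{4k} ≥ |f(a)|^{8k²}. -/

import Mathlib

/-!
Let `X = S₁ - S₂ + ⋯ - S_{2k}` be the alternating walk with steps uniform on `H`. Averaging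
`f(a·)` against its law `ρ_k` gives `𝔼_X 𝔼_{u ∈ H} e(auX/p) = 𝔼_X e(aX/p)`, because `uX` has
the same law as `X`; by independence of the steps this is `(f(a) f(-a))^k = |f(a)|^{2k}`.
Hence `|f(a)|^{8k²} = |∑ₓ ρ_k(x) f(ax)|^{4k}`, and the triangle inequality followed by Jensen's
inequality for `t ↦ t^{4k}` bounds this by `∑ₓ ρ_k(x) |f(ax)|^{4k}`.
-/

/-- `eChar p x` is `e(x/p) = exp(2πi x̃/p)` where `x̃` is the integer representative of `x`. -/
noncomputable def eChar (p : ℕ) (x : ZMod p) : ℂ :=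
  Complex.exp (2 * Real.pi * Complex.I * (x.val : ℂ) / p)

open Finset

lemma eChar_eq_stdAddChar {p : ℕ} [NeZero p] (x : ZMod p) : eChar p x = ZMod.stdAddChar x := by
  rw [ZMod.stdAddChar_apply, ZMod.toCircle_apply, eChar]

lemma AddChar.map_sum_eq_prod {ι A M : Type*} [AddCommMonoid A] [CommMonoid M] (ψ : AddChar A M)
    (s : Finset ι) (f : ι → A) : ψ (∑ i ∈ s, f i) = ∏ i ∈ s, ψ (f i) := by
  induction s using Finset.cons_induction with
  | empty => rw [sum_empty, prod_empty, AddChar.map_zero_eq_one]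
  | cons a s h ih => rw [sum_cons, prod_cons, AddChar.map_add_eq_mul, ih]

lemma prod_fin_two_mul_neg_one_pow {R M : Type*} [Monoid R] [HasDistribNeg R] [CommMonoid M]
    (g : R → M) (k : ℕ) : ∏ i : Fin (2 * k), g ((-1) ^ (i : ℕ)) = (g 1 * g (-1)) ^ k := by
  rw [Fin.prod_univ_eq_prod_range (fun i => g ((-1) ^ i))]
  induction k with
  | zero => simp
  | succ k ih =>
    rw [mul_add_one, prod_range_succ, prod_range_succ, ih, pow_succ, pow_succ, pow_mul,
      neg_one_sq, one_pow, one_mul, mul_assoc]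

lemma norm_sum_smul_pow_le {ι E : Type*} [NormedAddCommGroup E] [NormedSpace ℝ E]
    (s : Finset ι) (w : ι → ℝ) (g : ι → E) (hw : ∀ i ∈ s, 0 ≤ w i) (hw₁ : ∑ i ∈ s, w i = 1)
    (n : ℕ) : ‖∑ i ∈ s, w i • g i‖ ^ n ≤ ∑ i ∈ s, w i * ‖g i‖ ^ n := by
  have htriangle : ‖∑ i ∈ s, w i • g i‖ ≤ ∑ i ∈ s, w i * ‖g i‖ :=
    (norm_sum_le _ _).trans_eq <| sum_congr rfl fun i hi => by
      rw [norm_smul, Real.norm_of_nonneg (hw i hi)]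
  calc ‖∑ i ∈ s, w i • g i‖ ^ n ≤ (∑ i ∈ s, w i * ‖g i‖) ^ n :=
        pow_le_pow_left₀ (norm_nonneg _) htriangle n
    _ ≤ ∑ i ∈ s, w i * ‖g i‖ ^ n :=
        Real.pow_arith_mean_le_arith_mean_pow s w _ hw hw₁ (fun i _ => norm_nonneg _) n

section AlternatingWalk

variable {R : Type*} [CommRing R] {H : Subgroup Rˣ}

def altSum {n : ℕ} (s : Fin n → H) : R := ∑ i : Fin n, (-1 : R) ^ (i : ℕ) * ((s i : Rˣ) : R)

lemma altSum_mul_left {n : ℕ} (u : H) (s : Fin n → H) :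
    altSum (fun i => u * s i) = ((u : Rˣ) : R) * altSum s := by
  simp only [altSum, mul_sum, Subgroup.coe_mul, Units.val_mul]
  exact sum_congr rfl fun i _ => by ring

variable (H) in
noncomputable def walkDensity (k : ℕ) (x : R) : ℝ :=
  (Nat.card {s : Fin (2 * k) → H // altSum s = x} : ℝ) / (Nat.card H : ℝ) ^ (2 * k)

lemma walkDensity_nonneg (k : ℕ) (x : R) : 0 ≤ walkDensity H k x := by
  unfold walkDensity
  positivity

variable [Fintype R] [Fintype H]

lemma sum_walkDensity_smul {E : Type*} [AddCommGroup E] [Module ℝ E] (k : ℕ) (g : R → E) :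
    ∑ x, walkDensity H k x • g x =
      ((Nat.card H : ℝ) ^ (2 * k))⁻¹ • ∑ s : Fin (2 * k) → H, g (altSum s) := by
  classical
  simp only [walkDensity, div_eq_inv_mul, mul_smul, ← smul_sum]
  rw [← Fintype.sum_fiberwise' altSum g]
  simp only [sum_const, card_univ, Nat.card_eq_fintype_card, Nat.cast_smul_eq_nsmul]

lemma sum_walkDensity (k : ℕ) : ∑ x, walkDensity H k x = 1 := by
  have hcard : (Nat.card H : ℝ) ≠ 0 := Nat.cast_ne_zero.mpr Nat.card_pos.ne'
  simpa [Nat.card_fun, hcard] using sum_walkDensity_smul (H := H) k (fun _ => (1 : ℝ))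

end AlternatingWalk

section CharacterAverage

variable {R : Type*} [CommRing R]

variable (ψ : AddChar R ℂ) (H : Subgroup Rˣ) [Fintype H] in
noncomputable def charAvg (a : R) : ℂ :=
  (1 / (Nat.card H : ℂ)) * ∑ s : H, ψ (a * ((s : Rˣ) : R))

variable {ψ : AddChar R ℂ} {H : Subgroup Rˣ} [Fintype H]

lemma sum_addChar_altSum (k : ℕ) (a : R) :
    ∑ s : Fin (2 * k) → H, ψ (a * altSum s) =
      ((∑ t : H, ψ (a * ((t : Rˣ) : R))) * ∑ t : H, ψ (-(a * ((t : Rˣ) : R)))) ^ k := by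
  have hfactor (s : Fin (2 * k) → H) :
      ψ (a * altSum s) = ∏ i : Fin (2 * k), ψ (a * ((-1) ^ (i : ℕ) * ((s i : Rˣ) : R))) := by
    rw [altSum, mul_sum, AddChar.map_sum_eq_prod]
  simp_rw [hfactor, ← Fintype.prod_sum fun (i : Fin (2 * k)) (t : H) =>
    ψ (a * ((-1) ^ (i : ℕ) * ((t : Rˣ) : R)))]
  simpa using
    prod_fin_two_mul_neg_one_pow (fun ε : R => ∑ t : H, ψ (a * (ε * ((t : Rˣ) : R)))) k

lemma sum_addChar_altSum_eq_norm_sq [Finite R] (k : ℕ) (a : R) :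
    ∑ s : Fin (2 * k) → H, ψ (a * altSum s) =
      ((‖∑ t : H, ψ (a * ((t : Rˣ) : R))‖ ^ 2 : ℝ) : ℂ) ^ k := by
  have hconj : ∑ t : H, ψ (-(a * ((t : Rˣ) : R))) =
      (starRingEnd ℂ) (∑ t : H, ψ (a * ((t : Rˣ) : R))) := by
    simp only [map_sum, AddChar.map_neg_eq_conj]
  rw [sum_addChar_altSum, hconj, Complex.mul_conj, Complex.normSq_eq_norm_sq]

lemma sum_charAvg_altSum {n : ℕ} (a : R) :
    ∑ s : Fin n → H, charAvg ψ H (a * altSum s) = ∑ s : Fin n → H, ψ (a * altSum s) := by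
  have hinvariant (u : H) :
      ∑ s : Fin n → H, ψ (a * altSum s * ((u : Rˣ) : R)) = ∑ s : Fin n → H, ψ (a * altSum s) :=
    Fintype.sum_equiv (Equiv.piCongrRight fun _ => Equiv.mulLeft u) _ _ fun s => by
      change _ = ψ (a * altSum fun i => u * s i)
      rw [altSum_mul_left]
      ring_nf
  have hcard : (Nat.card H : ℂ) ≠ 0 := Nat.cast_ne_zero.mpr Nat.card_pos.ne'
  simp only [charAvg, ← mul_sum]
  rw [sum_comm, sum_congr rfl fun u _ => hinvariant u, sum_const, card_univ,
    ← Nat.card_eq_fintype_card, nsmul_eq_mul, ← mul_assoc, one_div_mul_cancel hcard, one_mul]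

lemma sum_walkDensity_smul_charAvg [Fintype R] (k : ℕ) (a : R) :
    ∑ x, walkDensity H k x • charAvg ψ H (a * x) = ((‖charAvg ψ H a‖ ^ (2 * k) : ℝ) : ℂ) := by
  have hnorm : ‖∑ t : H, ψ (a * ((t : Rˣ) : R))‖ = Nat.card H * ‖charAvg ψ H a‖ := by
    rw [charAvg, norm_mul, norm_div, norm_one, Complex.norm_natCast, ← mul_assoc,
      mul_one_div_cancel (Nat.cast_ne_zero.mpr Nat.card_pos.ne' : (Nat.card H : ℝ) ≠ 0), one_mul]
  rw [sum_walkDensity_smul, sum_charAvg_altSum, sum_addChar_altSum_eq_norm_sq, hnorm,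
    Complex.real_smul]
  push_cast
  field_simp
  ring

end CharacterAverage

open scoped Classical in
theorem random_walk_expansion_inequality_general (p : ℕ) [Fact p.Prime]
    (H : Subgroup (ZMod p)ˣ) (k : ℕ)
    (f : ZMod p → ℂ)
    (hf : ∀ a : ZMod p, f a = (1 / (Nat.card H : ℂ)) *
        ∑ s : H, eChar p (a * ((s : (ZMod p)ˣ) : ZMod p)))
    (ρk : ZMod p → ℝ)
    (hρk : ∀ x : ZMod p, ρk x =
      (Nat.card {s : Fin (2 * k) → H //
          ∑ i : Fin (2 * k), (-1 : ZMod p) ^ (i : ℕ) * ((s i : (ZMod p)ˣ) : ZMod p) = x} : ℝ) /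
        (Nat.card H : ℝ) ^ (2 * k)) :
    ∀ a : ZMod p,
      ‖f a‖ ^ (8 * k ^ 2) ≤ ∑ x, ρk x * ‖f (a * x)‖ ^ (4 * k) := by
  intro a
  obtain rfl : ρk = walkDensity H k := funext hρk
  obtain rfl : f = charAvg ZMod.stdAddChar H := funext fun b => by
    simp only [hf, charAvg, eChar_eq_stdAddChar]
  calc ‖charAvg ZMod.stdAddChar H a‖ ^ (8 * k ^ 2)
      = ‖∑ x, walkDensity H k x • charAvg ZMod.stdAddChar H (a * x)‖ ^ (4 * k) := by
        rw [sum_walkDensity_smul_charAvg, Complex.norm_real, norm_pow, norm_norm, ← pow_mul]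
        ring_nf
    _ ≤ ∑ x, walkDensity H k x * ‖charAvg ZMod.stdAddChar H (a * x)‖ ^ (4 * k) :=
        norm_sum_smul_pow_le _ _ _ (fun x _ => walkDensity_nonneg k x) (sum_walkDensity k) _

open scoped Classical in
/-- For `H` a subgroup of `𝔽_p^×`, `f(a) = (1/|H|)∑_{s∈H} e(as/p)`, and `ρ_k` the density
of the alternating random walk `S₁ - S₂ + ⋯ + S_{2k-1} - S_{2k}` with steps uniform on
`H`, one has `∑_x ρ_k(x)·|f(ax)|^{4k} ≥ |f(a)|^{8k²}` for every `a ∈ 𝔽_p`. -/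
theorem random_walk_expansion_inequality (p : ℕ) [Fact p.Prime]
    (H : Subgroup (ZMod p)ˣ) (k : ℕ) (hk : 1 ≤ k)
    (f : ZMod p → ℂ)
    (hf : ∀ a : ZMod p, f a = (1 / (Nat.card H : ℂ)) *
        ∑ s : H, eChar p (a * ((s : (ZMod p)ˣ) : ZMod p)))
    (ρk : ZMod p → ℝ)
    (hρk : ∀ x : ZMod p, ρk x =
      (Nat.card {s : Fin (2 * k) → H //
          ∑ i : Fin (2 * k), (-1 : ZMod p) ^ (i : ℕ) * ((s i : (ZMod p)ˣ) : ZMod p) = x} : ℝ) /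
        (Nat.card H : ℝ) ^ (2 * k)) :
    ∀ a : ZMod p,
      ‖f a‖ ^ (8 * k ^ 2) ≤ ∑ x, ρk x * ‖f (a * x)‖ ^ (4 * k) :=
  random_walk_expansion_inequality_general p H k f hf ρk hρk
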